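/- arXiv:1312.7770 — 9 statements merged into one kernel-verified Lean document; each statement's English description precedes it below -/
import Mathlib

section
/- Let P be a partially ordered set with a least element and a greatest element, and suppose that both the strict order relation < on P and its reverse > are well-founded. Then every pair of elements of P has a least upper bound and a greatest lower bound (i.e., P is a lattice) if and only if P contains no bowtie. -/
/-- A *bowtie* in a poset `P` is a 4-tuple `(a, b : c, d)` of pairwise distinct elements such
that `a` and `b` are both minimal elements of the set of common upper bounds of `c` and `d`,
and `c` and `d` are both maximal elements of the set of common lower bounds of `a` and `b`. -/
def IsBowtie {P : Type*} [PartialOrder P] (a b c d : P) : Prop :=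
  a ≠ b ∧ a ≠ c ∧ a ≠ d ∧ b ≠ c ∧ b ≠ d ∧ c ≠ d ∧
  c ≤ a ∧ c ≤ b ∧ d ≤ a ∧ d ≤ b ∧
  (∀ x, c ≤ x → d ≤ x → x ≤ a → x = a) ∧
  (∀ x, c ≤ x → d ≤ x → x ≤ b → x = b) ∧
  (∀ x, x ≤ a → x ≤ b → c ≤ x → x = c) ∧
  (∀ x, x ≤ a → x ≤ b → d ≤ x → x = d)

theorem exists_lub_of_no_bowtie {P : Type*} [PartialOrder P] [OrderTop P]
    [WellFoundedLT P] [WellFoundedGT P]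
    (h : ¬ ∃ a b c d : P, IsBowtie a b c d) (x y : P) : ∃ z, IsLUB {x, y} z := by
  by_contra hlub
  push_neg at hlub
  obtain ⟨a, ⟨hxa, hya⟩, hamin⟩ :=
    (wellFounded_lt (α := P)).has_min {z | x ≤ z ∧ y ≤ z} ⟨⊤, le_top, le_top⟩
  have hna : ¬ IsLUB {x, y} a := hlub a
  have hex : ∃ u, (x ≤ u ∧ y ≤ u) ∧ ¬ a ≤ u := by
    by_contra hc
    push_neg at hc
    exact hna ⟨by rintro w (rfl | rfl) <;> assumption,
      fun u hu => hc u ⟨hu (Set.mem_insert _ _), hu (Set.mem_insert_of_mem _ rfl)⟩⟩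
  obtain ⟨u, ⟨hxu, hyu⟩, hau⟩ := hex
  obtain ⟨b, ⟨⟨hxb, hyb⟩, hbu⟩, hbmin⟩ :=
    (wellFounded_lt (α := P)).has_min {z | (x ≤ z ∧ y ≤ z) ∧ z ≤ u} ⟨u, ⟨hxu, hyu⟩, le_refl u⟩
  have hmina : ∀ z, x ≤ z → y ≤ z → z ≤ a → z = a := by
    intro z h1 h2 h3
    by_contra hne
    exact hamin z ⟨h1, h2⟩ (h3.lt_of_ne hne)
  have hminb : ∀ z, x ≤ z → y ≤ z → z ≤ b → z = b := by
    intro z h1 h2 h3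
    by_contra hne
    exact hbmin z ⟨⟨h1, h2⟩, h3.trans hbu⟩ (h3.lt_of_ne hne)
  have hab : ¬ a ≤ b := fun hle => hau (hle.trans hbu)
  have hba : ¬ b ≤ a := fun hle => hau ((hmina b hxb hyb hle) ▸ hbu)
  obtain ⟨c, ⟨⟨hca, hcb⟩, hxc⟩, hcmax⟩ :=
    (wellFounded_gt (α := P)).has_min {z | (z ≤ a ∧ z ≤ b) ∧ x ≤ z} ⟨x, ⟨hxa, hxb⟩, le_refl x⟩
  obtain ⟨d, ⟨⟨hda, hdb⟩, hyd⟩, hdmax⟩ :=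
    (wellFounded_gt (α := P)).has_min {z | (z ≤ a ∧ z ≤ b) ∧ y ≤ z} ⟨y, ⟨hya, hyb⟩, le_refl y⟩
  have hmaxc : ∀ z, z ≤ a → z ≤ b → c ≤ z → z = c := by
    intro z h1 h2 h3
    by_contra hne
    exact hcmax z ⟨⟨h1, h2⟩, hxc.trans h3⟩ (h3.lt_of_ne (Ne.symm hne))
  have hmaxd : ∀ z, z ≤ a → z ≤ b → d ≤ z → z = d := by
    intro z h1 h2 h3
    by_contra hne
    exact hdmax z ⟨⟨h1, h2⟩, hyd.trans h3⟩ (h3.lt_of_ne (Ne.symm hne))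
  have hcd : c ≠ d := by
    rintro rfl
    have h1 := hmina c hxc hyd hca
    have h2 := hminb c hxc hyd hcb
    exact hab (le_of_eq (h1.symm.trans h2))
  refine h ⟨a, b, c, d, fun he => hab he.le,
    fun he => hab (he.trans_le hcb), fun he => hab (he.trans_le hdb),
    fun he => hba (he.trans_le hca), fun he => hba (he.trans_le hda),
    hcd, hca, hcb, hda, hdb, ?_, ?_, hmaxc, hmaxd⟩
  · exact fun z h1 h2 h3 => hmina z (hxc.trans h1) (hyd.trans h2) h3
  · exact fun z h1 h2 h3 => hminb z (hxc.trans h1) (hyd.trans h2) h3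

/-- A bounded poset, in which the strict order and its reverse are well-founded, is a lattice
(every pair of elements has a least upper bound and a greatest lower bound) if and only if it
contains no bowtie. -/
theorem lattice_iff_no_bowtie {P : Type*} [PartialOrder P] [BoundedOrder P]
    [WellFoundedLT P] [WellFoundedGT P] :
    (∀ x y : P, (∃ z, IsLUB {x, y} z) ∧ (∃ z, IsGLB {x, y} z)) ↔
      ¬ ∃ a b c d : P, IsBowtie a b c d := by
  constructor
  · rintro hl ⟨a, b, c, d, hab, hac, had, hbc, hbd, hcd, hca, hcb, hda, hdb, mina, minb, maxc, maxd⟩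
    obtain ⟨⟨s, hs⟩, -⟩ := hl c d
    have hsc : c ≤ s := hs.1 (Set.mem_insert _ _)
    have hsd : d ≤ s := hs.1 (Set.mem_insert_of_mem _ rfl)
    have hsa : s ≤ a := hs.2 (by rintro w (rfl | rfl) <;> assumption)
    have hsb : s ≤ b := hs.2 (by rintro w (rfl | rfl) <;> assumption)
    exact hab ((mina s hsc hsd hsa).symm.trans (minb s hsc hsd hsb))
  · intro h x y
    have h' : ¬ ∃ a b c d : Pᵒᵈ, IsBowtie a b c d := by
      rintro ⟨a, b, c, d, hab, hac, had, hbc, hbd, hcd, hca, hcb, hda, hdb, mina, minb, maxc, maxd⟩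
      exact h ⟨OrderDual.ofDual c, OrderDual.ofDual d, OrderDual.ofDual a, OrderDual.ofDual b,
        hcd, Ne.symm hac, Ne.symm hbc, Ne.symm had, Ne.symm hbd, hab,
        hca, hda, hcb, hdb, maxc, maxd, mina, minb⟩
    refine ⟨exists_lub_of_no_bowtie h x y, ?_⟩
    obtain ⟨z, hz⟩ := exists_lub_of_no_bowtie (P := Pᵒᵈ) h'
      (OrderDual.toDual x) (OrderDual.toDual y)
    refine ⟨OrderDual.ofDual z, ?_, ?_⟩
    · rintro w (rfl | rfl)
      · exact hz.1 (Set.mem_insert _ _)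
      · exact hz.1 (Set.mem_insert_of_mem _ rfl)
    · intro w hw
      exact hz.2 (by rintro v (rfl | rfl)
                     · exact hw (Set.mem_insert _ _)
                     · exact hw (Set.mem_insert_of_mem _ rfl))
end

section
/- Let P be a partially ordered set with a least element ⊥ and a greatest element ⊤, and suppose that both the strict order < and its reverse are well-founded. If every pair of atoms of P has a least upper bound in P and P is not a lattice, then P contains a proper subinterval that is not a lattice: there exist x ≤ y in P with (x,y) ≠ (⊥,⊤) such that in the subposet [x,y] = {p : x ≤ p ≤ y}, with the induced order, some pair of elements has no least upper bound or no greatest lower bound within [x,y]. -/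
open Set

private lemma icc_lub_spec {P : Type*} [PartialOrder P] {x y : P} {u v z : Set.Icc x y}
    (h : IsLUB {u, v} z) :
    (u : P) ≤ z ∧ (v : P) ≤ z ∧
      ∀ w : P, x ≤ w → w ≤ y → (u : P) ≤ w → (v : P) ≤ w → (z : P) ≤ w := by
  refine ⟨Subtype.coe_le_coe.2 (h.1 (Set.mem_insert _ _)),
    Subtype.coe_le_coe.2 (h.1 (Set.mem_insert_of_mem _ rfl)), ?_⟩
  intro w hxw hwy h1 h2
  have hz : z ≤ (⟨w, hxw, hwy⟩ : Set.Icc x y) := h.2 (by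
    rintro t (rfl | rfl)
    · exact h1
    · exact h2)
  exact hz

private lemma icc_glb_spec {P : Type*} [PartialOrder P] {x y : P} {u v z : Set.Icc x y}
    (h : IsGLB {u, v} z) :
    (z : P) ≤ u ∧ (z : P) ≤ v ∧
      ∀ w : P, x ≤ w → w ≤ y → w ≤ (u : P) → w ≤ (v : P) → w ≤ (z : P) := by
  refine ⟨Subtype.coe_le_coe.2 (h.1 (Set.mem_insert _ _)),
    Subtype.coe_le_coe.2 (h.1 (Set.mem_insert_of_mem _ rfl)), ?_⟩
  intro w hxw hwy h1 h2
  have hz : (⟨w, hxw, hwy⟩ : Set.Icc x y) ≤ z := h.2 (by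
    rintro t (rfl | rfl)
    · exact h1
    · exact h2)
  exact hz

private lemma key_lattice {P : Type*} [PartialOrder P] [BoundedOrder P]
    [WellFoundedLT P] [WellFoundedGT P]
    (hatoms : ∀ a b : P, IsAtom a → IsAtom b → ∃ z, IsLUB {a, b} z)
    (hI : ∀ x y : P, x ≤ y → ¬(x = ⊥ ∧ y = ⊤) →
      ∀ u v : Set.Icc x y, (∃ z, IsLUB {u, v} z) ∧ (∃ z, IsGLB {u, v} z))
    (a b : P) : (∃ z, IsLUB {a, b} z) ∧ (∃ z, IsGLB {a, b} z) := by
  -- atoms exist below nonbot elements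
  have hAtomic : IsAtomic P := isAtomic_of_orderBot_wellFounded_lt IsWellFounded.wf
  have hatomle : ∀ c : P, c ≠ ⊥ → ∃ x : P, IsAtom x ∧ x ≤ c := by
    intro c hc
    rcases hAtomic.eq_bot_or_exists_atom_le c with h | h
    · exact absurd h hc
    · exact h
  -- Lemma A: if p, q share an atom below, the LUB of {p, q} exists
  have lemA : ∀ p q x : P, IsAtom x → x ≤ p → x ≤ q → ∃ z, IsLUB {p, q} z := by
    intro p q x hx hxp hxq
    obtain ⟨z, hz⟩ := (hI x ⊤ le_top (fun h => hx.1 h.1)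
      ⟨p, hxp, le_top⟩ ⟨q, hxq, le_top⟩).1
    obtain ⟨h1, h2, h3⟩ := icc_lub_spec hz
    refine ⟨z, ?_, ?_⟩
    · rintro t (rfl | rfl)
      · exact h1
      · exact h2
    · intro w hw
      exact h3 w (hxp.trans (hw (Set.mem_insert _ _))) le_top
        (hw (Set.mem_insert _ _)) (hw (Set.mem_insert_of_mem _ rfl))
  -- maximal lower bounds above any lower bound
  have hmax : ∀ c ∈ lowerBounds ({a, b} : Set P),
      ∃ n, n ∈ lowerBounds ({a, b} : Set P) ∧ c ≤ n ∧
        ∀ d ∈ lowerBounds ({a, b} : Set P), ¬ n < d := by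
    intro c hc
    obtain ⟨n, ⟨hn, hcn⟩, hm⟩ :=
      (IsWellFounded.wf : WellFounded ((· > ·) : P → P → Prop)).has_min
        {d | d ∈ lowerBounds ({a, b} : Set P) ∧ c ≤ d} ⟨c, hc, le_rfl⟩
    exact ⟨n, hn, hcn, fun d hd hlt => hm d ⟨hd, hcn.trans hlt.le⟩ hlt⟩
  -- Lemma C: two maximal lower bounds sharing an atom below are equal
  have lemC : ∀ n n' : P, n ∈ lowerBounds ({a, b} : Set P) →
      n' ∈ lowerBounds ({a, b} : Set P) →
      (∀ d ∈ lowerBounds ({a, b} : Set P), ¬ n < d) →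
      (∀ d ∈ lowerBounds ({a, b} : Set P), ¬ n' < d) →
      (∃ x : P, IsAtom x ∧ x ≤ n ∧ x ≤ n') → n = n' := by
    rintro n n' hn hn' hmn hmn' ⟨x, hx, hxn, hxn'⟩
    have hna : n ≤ a := hn (Set.mem_insert _ _)
    have hnb : n ≤ b := hn (Set.mem_insert_of_mem _ rfl)
    have hn'a : n' ≤ a := hn' (Set.mem_insert _ _)
    have hn'b : n' ≤ b := hn' (Set.mem_insert_of_mem _ rfl)
    obtain ⟨t, ht⟩ := (hI x ⊤ le_top (fun h => hx.1 h.1)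
      ⟨a, hxn.trans hna, le_top⟩ ⟨b, hxn.trans hnb, le_top⟩).2
    obtain ⟨h1, h2, h3⟩ := icc_glb_spec ht
    have htL : (t : P) ∈ lowerBounds ({a, b} : Set P) := by
      rintro u (rfl | rfl)
      · exact h1
      · exact h2
    have hnt : n ≤ (t : P) := h3 n hxn le_top hna hnb
    have hn't : n' ≤ (t : P) := h3 n' hxn' le_top hn'a hn'b
    have e1 : n = (t : P) := by
      by_contra h
      exact hmn t htL (hnt.lt_of_ne h)
    have e2 : n' = (t : P) := by
      by_contra h
      exact hmn' t htL (hn't.lt_of_ne h)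
    exact e1.trans e2.symm
  constructor
  · -- LUB exists
    by_cases ha : a = ⊥
    · subst ha
      refine ⟨b, ?_, fun w hw => hw (Set.mem_insert_of_mem _ rfl)⟩
      rintro t (rfl | rfl)
      · exact bot_le
      · exact le_rfl
    by_cases hb : b = ⊥
    · subst hb
      refine ⟨a, ?_, fun w hw => hw (Set.mem_insert _ _)⟩
      rintro t (rfl | rfl)
      · exact le_rfl
      · exact bot_le
    obtain ⟨x, hx, hxa⟩ := hatomle a ha
    obtain ⟨x', hx', hx'b⟩ := hatomle b hb
    by_cases hxx : x = x'
    · subst hxx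
      exact lemA a b x hx hxa hx'b
    · obtain ⟨s, hs⟩ := hatoms x x' hx hx'
      have hxs : x ≤ s := hs.1 (Set.mem_insert _ _)
      have hx's : x' ≤ s := hs.1 (Set.mem_insert_of_mem _ rfl)
      obtain ⟨j, hj⟩ := lemA a s x hx hxa hxs
      have haj : a ≤ j := hj.1 (Set.mem_insert _ _)
      have hsj : s ≤ j := hj.1 (Set.mem_insert_of_mem _ rfl)
      obtain ⟨k, hk⟩ := lemA j b x' hx' (hx's.trans hsj) hx'b
      refine ⟨k, ?_, ?_⟩
      · rintro t (rfl | rfl)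
        · exact haj.trans (hk.1 (Set.mem_insert _ _))
        · exact hk.1 (Set.mem_insert_of_mem _ rfl)
      · intro w hw
        have hwa : a ≤ w := hw (Set.mem_insert _ _)
        have hwb : b ≤ w := hw (Set.mem_insert_of_mem _ rfl)
        have hws : s ≤ w := hs.2 (by
          rintro t (rfl | rfl)
          · exact hxa.trans hwa
          · exact hx'b.trans hwb)
        have hwj : j ≤ w := hj.2 (by
          rintro t (rfl | rfl)
          · exact hwa
          · exact hws)
        exact hk.2 (by
          rintro t (rfl | rfl)
          · exact hwj
          · exact hwb)
  · -- GLB exists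
    obtain ⟨n, hnL, -, hnmax⟩ := hmax ⊥ (fun t _ => bot_le)
    by_cases hn0 : n = ⊥
    · subst hn0
      refine ⟨⊥, fun t _ => bot_le, fun w hw => ?_⟩
      by_contra h
      exact hnmax w hw (bot_lt_iff_ne_bot.2 (fun hwb => h (hwb ▸ le_rfl)))
    · have huniq : ∀ n₁ n₂ : P, n₁ ∈ lowerBounds ({a, b} : Set P) →
          n₂ ∈ lowerBounds ({a, b} : Set P) →
          (∀ d ∈ lowerBounds ({a, b} : Set P), ¬ n₁ < d) →
          (∀ d ∈ lowerBounds ({a, b} : Set P), ¬ n₂ < d) →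
          n₁ ≠ ⊥ → n₂ ≠ ⊥ → n₁ = n₂ := by
        intro n₁ n₂ h1 h2 m1 m2 ne1 ne2
        obtain ⟨x, hx, hxn⟩ := hatomle n₁ ne1
        obtain ⟨x', hx', hx'n⟩ := hatomle n₂ ne2
        by_cases hxx : x = x'
        · subst hxx
          exact lemC n₁ n₂ h1 h2 m1 m2 ⟨x, hx, hxn, hx'n⟩
        · obtain ⟨s, hs⟩ := hatoms x x' hx hx'
          have hsL : s ∈ lowerBounds ({a, b} : Set P) := by
            rintro u (rfl | rfl)
            · exact hs.2 (by
                rintro t (rfl | rfl)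
                · exact hxn.trans (h1 (Set.mem_insert _ _))
                · exact hx'n.trans (h2 (Set.mem_insert _ _)))
            · exact hs.2 (by
                rintro t (rfl | rfl)
                · exact hxn.trans (h1 (Set.mem_insert_of_mem _ rfl))
                · exact hx'n.trans (h2 (Set.mem_insert_of_mem _ rfl)))
          obtain ⟨n₃, h3L, hsn3, m3⟩ := hmax s hsL
          have e1 : n₁ = n₃ := lemC _ _ h1 h3L m1 m3
            ⟨x, hx, hxn, (hs.1 (Set.mem_insert _ _)).trans hsn3⟩
          have e2 : n₂ = n₃ := lemC _ _ h2 h3L m2 m3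
            ⟨x', hx', hx'n, (hs.1 (Set.mem_insert_of_mem _ rfl)).trans hsn3⟩
          exact e1.trans e2.symm
      refine ⟨n, hnL, fun c hc => ?_⟩
      by_cases hc0 : c = ⊥
      · exact hc0 ▸ bot_le
      · obtain ⟨n', h'L, hcn', m'⟩ := hmax c hc
        have hn'0 : n' ≠ ⊥ := fun h => hc0 (le_bot_iff.1 (h ▸ hcn'))
        exact hcn'.trans (huniq n n' hnL h'L hnmax m' hn0 hn'0).ge

/-- If `P` is a bounded poset whose strict order and its reverse are well-founded, in which
every pair of atoms has a least upper bound, and `P` is not a lattice, then some proper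
subinterval `[x, y]` of `P` is not a lattice. -/
theorem exists_nonlattice_proper_subinterval {P : Type*} [PartialOrder P] [BoundedOrder P]
    [WellFoundedLT P] [WellFoundedGT P]
    (hatoms : ∀ a b : P, IsAtom a → IsAtom b → ∃ z, IsLUB {a, b} z)
    (hnotlattice : ¬ ∀ x y : P, (∃ z, IsLUB {x, y} z) ∧ (∃ z, IsGLB {x, y} z)) :
    ∃ x y : P, x ≤ y ∧ ¬(x = ⊥ ∧ y = ⊤) ∧
      ∃ u v : Set.Icc x y,
        (¬ ∃ z : Set.Icc x y, IsLUB {u, v} z) ∨ (¬ ∃ z : Set.Icc x y, IsGLB {u, v} z) := by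
  by_contra hcon
  refine hnotlattice (key_lattice hatoms ?_)
  intro x y hxy hne u v
  constructor
  · by_contra hL
    exact hcon ⟨x, y, hxy, hne, u, v, Or.inl hL⟩
  · by_contra hG
    exact hcon ⟨x, y, hxy, hne, u, v, Or.inr hG⟩
end

section
/- Let P be a partially ordered set with a least element ⊥ and a greatest element ⊤, and suppose that both the strict order < and its reverse are well-founded. If every pair of atoms of P has a least upper bound in P, and for every x ≤ y in P with (x,y) ≠ (⊥,⊤) the subposet [x,y] = {p : x ≤ p ≤ y} is a lattice (every pair of its elements has a least upper bound and a greatest lower bound within [x,y]), then P itself is a lattice. -/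
/-- Lattice induction: if `P` is a bounded poset whose strict order and its reverse are
well-founded, in which every pair of atoms has a least upper bound and every proper
subinterval `[x, y]` is a lattice, then `P` itself is a lattice. -/
theorem lattice_induction {P : Type*} [PartialOrder P] [BoundedOrder P]
    [WellFoundedLT P] [WellFoundedGT P]
    (hatoms : ∀ a b : P, IsAtom a → IsAtom b → ∃ z, IsLUB {a, b} z)
    (hsub : ∀ x y : P, x ≤ y → ¬(x = ⊥ ∧ y = ⊤) →
      ∀ u v : Set.Icc x y,
        (∃ z : Set.Icc x y, IsLUB {u, v} z) ∧ (∃ z : Set.Icc x y, IsGLB {u, v} z)) :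
    ∀ x y : P, (∃ z, IsLUB {x, y} z) ∧ (∃ z, IsGLB {x, y} z) := by
  -- Lemma A: if x and y have a common lower bound w ≠ ⊥, then they have a LUB.
  have lemA : ∀ x y w : P, w ≠ ⊥ → w ≤ x → w ≤ y → ∃ z, IsLUB {x, y} z := by
    intro x y w hw hwx hwy
    have hx : x ∈ Set.Icc w (⊤ : P) := ⟨hwx, le_top⟩
    have hy : y ∈ Set.Icc w (⊤ : P) := ⟨hwy, le_top⟩
    obtain ⟨⟨z, hzI⟩, hz⟩ :=
      (hsub w ⊤ le_top (fun h => hw h.1) ⟨x, hx⟩ ⟨y, hy⟩).1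
    refine ⟨z, ?_, ?_⟩
    · rintro p (rfl | rfl)
      · exact hz.1 (Set.mem_insert _ _)
      · exact hz.1 (Set.mem_insert_of_mem _ rfl)
    · intro u hu
      have hux : x ≤ u := hu (Set.mem_insert _ _)
      have huI : u ∈ Set.Icc w (⊤ : P) := ⟨hwx.trans hux, le_top⟩
      have hmem : (⟨u, huI⟩ : Set.Icc w (⊤ : P)) ∈
          upperBounds {(⟨x, hx⟩ : Set.Icc w (⊤ : P)), ⟨y, hy⟩} := by
        rintro p (rfl | rfl)
        · exact hux
        · exact hu (Set.mem_insert_of_mem _ rfl)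
      exact hz.2 hmem
  -- every nonzero element has an atom below it
  have atom_le : ∀ x : P, x ≠ ⊥ → ∃ a, IsAtom a ∧ a ≤ x := by
    intro x hx
    obtain ⟨m, hm, hmin⟩ :=
      (IsWellFounded.wf (r := ((· < ·) : P → P → Prop))).has_min
        {p : P | p ≠ ⊥ ∧ p ≤ x} ⟨x, hx, le_rfl⟩
    refine ⟨m, ⟨hm.1, fun q hq => ?_⟩, hm.2⟩
    by_contra hq0
    exact hmin q ⟨hq0, hq.le.trans hm.2⟩ hq
  -- all pairwise joins exist
  have join : ∀ x y : P, ∃ z, IsLUB {x, y} z := by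
    intro x y
    by_cases hx : x = ⊥
    · subst hx
      refine ⟨y, ?_, fun u hu => hu (Set.mem_insert_of_mem _ rfl)⟩
      rintro p (rfl | rfl)
      · exact bot_le
      · exact le_rfl
    by_cases hy : y = ⊥
    · subst hy
      refine ⟨x, ?_, fun u hu => hu (Set.mem_insert _ _)⟩
      rintro p (rfl | rfl)
      · exact le_rfl
      · exact bot_le
    obtain ⟨a, ha, hax⟩ := atom_le x hx
    obtain ⟨b, hb, hby⟩ := atom_le y hy
    obtain ⟨c, hc⟩ := hatoms a b ha hb
    have hac : a ≤ c := hc.1 (Set.mem_insert _ _)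
    have hbc : b ≤ c := hc.1 (Set.mem_insert_of_mem _ rfl)
    obtain ⟨s₁, hs₁⟩ := lemA x c a ha.1 hax hac
    have hxs₁ : x ≤ s₁ := hs₁.1 (Set.mem_insert _ _)
    have hcs₁ : c ≤ s₁ := hs₁.1 (Set.mem_insert_of_mem _ rfl)
    obtain ⟨s₂, hs₂⟩ := lemA s₁ y b hb.1 (hbc.trans hcs₁) hby
    have hs₁s₂ : s₁ ≤ s₂ := hs₂.1 (Set.mem_insert _ _)
    have hys₂ : y ≤ s₂ := hs₂.1 (Set.mem_insert_of_mem _ rfl)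
    refine ⟨s₂, ?_, ?_⟩
    · rintro p (rfl | rfl)
      · exact hxs₁.trans hs₁s₂
      · exact hys₂
    · intro u hu
      have hux : x ≤ u := hu (Set.mem_insert _ _)
      have huy : y ≤ u := hu (Set.mem_insert_of_mem _ rfl)
      have hcu : c ≤ u := by
        refine hc.2 ?_
        rintro p (rfl | rfl)
        · exact hax.trans hux
        · exact hby.trans huy
      have hs₁u : s₁ ≤ u := by
        refine hs₁.2 ?_
        rintro p (rfl | rfl)
        · exact hux
        · exact hcu
      refine hs₂.2 ?_
      rintro p (rfl | rfl)
      · exact hs₁u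
      · exact huy
  intro x y
  refine ⟨join x y, ?_⟩
  -- take a maximal lower bound of {x, y}; it is the GLB
  obtain ⟨m, hmL, hmax⟩ :=
    (IsWellFounded.wf (r := ((· > ·) : P → P → Prop))).has_min
      (lowerBounds {x, y}) ⟨⊥, fun p _ => bot_le⟩
  refine ⟨m, hmL, fun w hw => ?_⟩
  obtain ⟨t, ht⟩ := join m w
  have hmt : m ≤ t := ht.1 (Set.mem_insert _ _)
  have hwt : w ≤ t := ht.1 (Set.mem_insert_of_mem _ rfl)
  have htL : t ∈ lowerBounds {x, y} := by
    rintro p (rfl | rfl)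
    · refine ht.2 ?_
      rintro q (rfl | rfl)
      · exact hmL (Set.mem_insert _ _)
      · exact hw (Set.mem_insert _ _)
    · refine ht.2 ?_
      rintro q (rfl | rfl)
      · exact hmL (Set.mem_insert_of_mem _ rfl)
      · exact hw (Set.mem_insert_of_mem _ rfl)
  have htm : t = m := by
    by_contra hne
    exact hmax t htL (lt_of_le_of_ne hmt (Ne.symm hne))
  exact htm ▸ hwt
end

section
/- For every n ≥ 1, the center of the middle group Mid(B_n) = (Fin n → ℤ) ⋊ Equiv.Perm (Fin n) is the infinite cyclic subgroup generated by the element t_𝟙 = ((1,1,…,1), id), i.e., the translation part equal to the all-ones vector and trivial permutation part. In particular the center is infinite cyclic. -/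
open Multiplicative

/-- The automorphism of `Multiplicative (Fin n → A)` permuting coordinates by `π`. -/
def permMulAut {n : ℕ} {A : Type*} [AddCommGroup A] (π : Equiv.Perm (Fin n)) :
    MulAut (Multiplicative (Fin n → A)) where
  toFun v := ofAdd fun i => toAdd v (π⁻¹ i)
  invFun v := ofAdd fun i => toAdd v (π i)
  left_inv v := by
    refine Multiplicative.toAdd.injective (funext fun i => ?_)
    simp
  right_inv v := by
    refine Multiplicative.toAdd.injective (funext fun i => ?_)
    simp
  map_mul' a b := rfl

/-- The coordinate-permutation action of `Equiv.Perm (Fin n)` on `Multiplicative (Fin n → A)`. -/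
def permAction (n : ℕ) (A : Type*) [AddCommGroup A] :
    Equiv.Perm (Fin n) →* MulAut (Multiplicative (Fin n → A)) where
  toFun := permMulAut
  map_one' := by
    refine MulEquiv.ext fun v => ?_
    refine Multiplicative.toAdd.injective (funext fun i => ?_)
    simp [permMulAut]
  map_mul' π σ := by
    refine MulEquiv.ext fun v => ?_
    refine Multiplicative.toAdd.injective (funext fun i => ?_)
    simp [permMulAut]

/-- The middle group `Mid(B_n) = (Fin n → ℤ) ⋊ Equiv.Perm (Fin n)`, with a permutation acting
on integer vectors by permuting coordinates. -/
abbrev Mid (n : ℕ) := Multiplicative (Fin n → ℤ) ⋊[permAction n ℤ] Equiv.Perm (Fin n)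

/-- The central translation `t_𝟙`: translation part the all-ones vector, trivial permutation. -/
def tOne (n : ℕ) : Mid n := SemidirectProduct.inl (ofAdd fun _ => (1 : ℤ))

/-!
A central element `(v, π)` commutes with every translation, so `π` fixes every vector; testing
on a vector supported at a single coordinate gives `π = 1` (for nontrivial coefficients). It also
commutes with every permutation, so `v` is invariant under all transpositions, i.e. constant.
Conversely, constant translations are central. Over `ℤ` these are exactly the powers of `t_𝟙`,
which has infinite order because its coordinates grow.
-/

namespace SemidirectProduct

variable {N G : Type*} [CommGroup N] [Group G] {φ : G →* MulAut N}

theorem mem_center_iff_of_comm {g : N ⋊[φ] G} :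
    g ∈ Subgroup.center (N ⋊[φ] G) ↔
      (∀ n, φ g.right n = n) ∧ (∀ h, φ h g.left = g.left) ∧ g.right ∈ Subgroup.center G := by
  simp only [Subgroup.mem_center_iff]
  constructor
  · intro hg
    refine ⟨fun n => ?_, fun h => ?_, fun h => ?_⟩
    · have hn : n * g.left = g.left * φ g.right n := by
        simpa [mul_left] using congrArg left (hg (inl n))
      exact (mul_left_cancel ((mul_comm _ _).trans hn)).symm
    · simpa [mul_left] using congrArg left (hg (inr h))
    · simpa [mul_right] using congrArg right (hg (inr h))
  · rintro ⟨hfix, hinv, hcen⟩ x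
    ext
    · simp [mul_left, hfix, hinv, mul_comm]
    · simp [mul_right, hcen x.right]

end SemidirectProduct

section PermAction

variable {n : ℕ} {A : Type*} [AddCommGroup A]

@[simp]
theorem toAdd_permAction_apply (π : Equiv.Perm (Fin n)) (v : Multiplicative (Fin n → A))
    (i : Fin n) : toAdd (permAction n A π v) i = toAdd v (π⁻¹ i) :=
  rfl

theorem eq_one_of_forall_permAction_eq [Nontrivial A] {π : Equiv.Perm (Fin n)}
    (h : ∀ v, permAction n A π v = v) : π = 1 := by
  obtain ⟨a, ha⟩ := exists_ne (0 : A)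
  refine Equiv.ext fun i => by_contra fun hi => ?_
  have hπi := congrFun (congrArg toAdd (h (ofAdd (Pi.single i a)))) (π i)
  exact hi (by simpa [Pi.single_apply, ha] using hπi)

theorem toAdd_eq_of_forall_permAction_eq {v : Multiplicative (Fin n → A)}
    (h : ∀ π, permAction n A π v = v) (i j : Fin n) : toAdd v i = toAdd v j := by
  simpa using congrFun (congrArg toAdd (h (Equiv.swap i j))) j

theorem mem_center_mid_iff [Nontrivial A]
    {g : Multiplicative (Fin n → A) ⋊[permAction n A] Equiv.Perm (Fin n)} :
    g ∈ Subgroup.center _ ↔ g.right = 1 ∧ ∀ i j, toAdd g.left i = toAdd g.left j := by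
  rw [SemidirectProduct.mem_center_iff_of_comm]
  constructor
  · rintro ⟨hright, hleft, -⟩
    exact ⟨eq_one_of_forall_permAction_eq hright, toAdd_eq_of_forall_permAction_eq hleft⟩
  · rintro ⟨hright, hleft⟩
    refine ⟨by simp [hright], fun π => ?_, by simp [hright]⟩
    ext i
    simp [hleft _ i]

end PermAction

theorem tOne_zpow (n : ℕ) (k : ℤ) : tOne n ^ k = SemidirectProduct.inl (ofAdd fun _ => k) := by
  rw [tOne, ← map_zpow]
  congr 1
  ext
  simp

theorem center_mid_eq_zpowers_tOne (m : ℕ) :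
    Subgroup.center (Mid (m + 1)) = Subgroup.zpowers (tOne (m + 1)) := by
  ext g
  rw [mem_center_mid_iff, Subgroup.mem_zpowers_iff]
  constructor
  · rintro ⟨hright, hleft⟩
    refine ⟨toAdd g.left 0, ?_⟩
    ext i
    · simp [tOne_zpow, hleft 0 i]
    · simp [tOne_zpow, hright]
  · rintro ⟨k, rfl⟩
    simp [tOne_zpow]

theorem not_isOfFinOrder_tOne (m : ℕ) : ¬ IsOfFinOrder (tOne (m + 1)) := by
  rw [← injective_zpow_iff_not_isOfFinOrder]
  intro k l hkl
  simp only [tOne_zpow, SemidirectProduct.inl_inj, EmbeddingLike.apply_eq_iff_eq] at hkl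
  exact congrFun hkl 0

/-- For every `n ≥ 1` (written `n = m + 1`), the center of the middle group `Mid(B_n)` is the
cyclic subgroup generated by the translation `t_𝟙` by the all-ones vector; this element has
infinite order, so the center is infinite cyclic. -/
theorem center_middleGroup (m : ℕ) :
    Subgroup.center (Mid (m + 1)) = Subgroup.zpowers (tOne (m + 1)) ∧
    ¬ IsOfFinOrder (tOne (m + 1)) ∧
    Infinite (Subgroup.center (Mid (m + 1))) := by
  refine ⟨center_mid_eq_zpowers_tOne m, not_isOfFinOrder_tOne m, ?_⟩
  rw [center_mid_eq_zpowers_tOne]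
  exact Set.infinite_coe_iff.2 (infinite_zpowers.2 (not_isOfFinOrder_tOne m))
end

section
/- Let G be a group and let S ⊆ G be a generating set with S = S⁻¹ that is closed under conjugation (g s g⁻¹ ∈ S for all s ∈ S and g ∈ G), and let ℓ : G → ℕ denote word length with respect to S. Then for all u, w ∈ G: ℓ(u) + ℓ(u⁻¹ w) = ℓ(w) if and only if ℓ(w u⁻¹) + ℓ(u) = ℓ(w). In other words, every interval [1,w] is balanced: the set of left divisors of w coincides with the set of its right divisors. -/
/-- The word length of `g` with respect to a generating set `S`: the least number of elements
of `S` whose product is `g`. -/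
noncomputable def wordLength {G : Type*} [Group G] (S : Set G) (g : G) : ℕ :=
  sInf {k | ∃ l : List G, l.length = k ∧ (∀ x ∈ l, x ∈ S) ∧ l.prod = g}

lemma wordLength_set_nonempty {G : Type*} [Group G] (S : Set G)
    (hgen : Subgroup.closure S = ⊤) (hsymm : ∀ s ∈ S, s⁻¹ ∈ S) (g : G) :
    {k | ∃ l : List G, l.length = k ∧ (∀ x ∈ l, x ∈ S) ∧ l.prod = g}.Nonempty := by
  have hg : g ∈ Subgroup.closure S := by rw [hgen]; trivial
  have hg' : g ∈ Submonoid.closure (S ∪ S⁻¹) := by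
    rw [← Subgroup.closure_toSubmonoid]; exact hg
  obtain ⟨l, hl, hprod⟩ := Submonoid.exists_list_of_mem_closure hg'
  refine ⟨l.length, l, rfl, fun x hx => ?_, hprod⟩
  rcases hl x hx with h | h
  · exact h
  · simpa using hsymm _ h

lemma wordLength_conj {G : Type*} [Group G] (S : Set G)
    (hgen : Subgroup.closure S = ⊤) (hsymm : ∀ s ∈ S, s⁻¹ ∈ S)
    (hconj : ∀ s ∈ S, ∀ g : G, g * s * g⁻¹ ∈ S) (g x : G) :
    wordLength S (g * x * g⁻¹) = wordLength S x := by
  have key : ∀ y g : G, wordLength S (g * y * g⁻¹) ≤ wordLength S y := by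
    intro y g
    obtain ⟨l, hlen, hmem, hprod⟩ :=
      Nat.sInf_mem (wordLength_set_nonempty S hgen hsymm y)
    conv_rhs => rw [wordLength, ← hlen]
    apply Nat.sInf_le
    refine ⟨l.map (fun s => g * s * g⁻¹), by simp, ?_, ?_⟩
    · intro x hx
      simp only [List.mem_map] at hx
      obtain ⟨s, hs, rfl⟩ := hx
      exact hconj s (hmem s hs) g
    · rw [← hprod]
      clear hmem hlen hprod
      induction l with
      | nil => simp
      | cons a t ih =>
        simp only [List.map_cons, List.prod_cons, ih]
        group
  refine le_antisymm (key x g) ?_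
  have := key (g * x * g⁻¹) g⁻¹
  simpa [mul_assoc] using this

/-- If `S` is a symmetric generating set of a group `G` that is closed under conjugation, then
with respect to the word length `ℓ` for `S`, an element `u` is a left divisor of `w`
(`ℓ(u) + ℓ(u⁻¹w) = ℓ(w)`) if and only if it is a right divisor of `w`
(`ℓ(wu⁻¹) + ℓ(u) = ℓ(w)`): every interval `[1, w]` is balanced. -/
theorem interval_balanced {G : Type*} [Group G] (S : Set G)
    (hgen : Subgroup.closure S = ⊤)
    (hsymm : ∀ s ∈ S, s⁻¹ ∈ S)
    (hconj : ∀ s ∈ S, ∀ g : G, g * s * g⁻¹ ∈ S) :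
    ∀ u w : G,
      wordLength S u + wordLength S (u⁻¹ * w) = wordLength S w ↔
      wordLength S (w * u⁻¹) + wordLength S u = wordLength S w := by
  intro u w
  have h : wordLength S (u⁻¹ * w) = wordLength S (w * u⁻¹) := by
    have := wordLength_conj S hgen hsymm hconj u⁻¹ (w * u⁻¹)
    rw [← this]
    congr 1
    group
  rw [h, Nat.add_comm]
end

section
/- Let G be a group and let S ⊆ G be a generating set with S = S⁻¹ that is closed under conjugation, let ℓ : G → ℕ denote word length with respect to S, and fix w ∈ G. Let [1,w] = {u ∈ G : ℓ(u) + ℓ(u⁻¹w) = ℓ(w)}, partially ordered by u ≼ v iff ℓ(u) + ℓ(u⁻¹v) + ℓ(v⁻¹w) = ℓ(w). Then the map u ↦ u⁻¹w is a bijection from [1,w] to itself, and it reverses the order: u ≼ v implies v⁻¹w ≼ u⁻¹w. In particular the poset [1,w] is self-dual. -/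
/-! The self-duality only uses that `ℓ` is a class function, i.e. `ℓ (a * b) = ℓ (b * a)`:
then `ℓ ((u⁻¹ * w)⁻¹ * w) = ℓ (w⁻¹ * u * w) = ℓ u` and
`ℓ ((v⁻¹ * w)⁻¹ * (u⁻¹ * w)) = ℓ (w⁻¹ * v * u⁻¹ * w) = ℓ (u⁻¹ * v)`, so `u ↦ u⁻¹ * w` permutes the
three summands of each defining equation.  Word length is a class function as soon as `S` is
closed under conjugation, because conjugation maps words in `S` to words of the same length. -/

section ClassFunction

variable {G M : Type*} [Group G] {ℓ : G → M}

lemma apply_inv_mul_inv_mul (hℓ : ∀ a b, ℓ (a * b) = ℓ (b * a)) (u w : G) :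
    ℓ ((u⁻¹ * w)⁻¹ * w) = ℓ u := by
  calc ℓ ((u⁻¹ * w)⁻¹ * w) = ℓ (w⁻¹ * (u * w)) := by group
    _ = ℓ (u * w * w⁻¹) := hℓ _ _
    _ = ℓ u := by rw [mul_inv_cancel_right]

lemma bijOn_inv_mul_interval [AddCommMonoid M] (hℓ : ∀ a b, ℓ (a * b) = ℓ (b * a)) (w : G) :
    Set.BijOn (fun u => u⁻¹ * w) {u | ℓ u + ℓ (u⁻¹ * w) = ℓ w}
      {u | ℓ u + ℓ (u⁻¹ * w) = ℓ w} := by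
  have hmaps : Set.MapsTo (fun u => u⁻¹ * w) {u | ℓ u + ℓ (u⁻¹ * w) = ℓ w}
      {u | ℓ u + ℓ (u⁻¹ * w) = ℓ w} := by
    intro u hu
    show ℓ (u⁻¹ * w) + ℓ ((u⁻¹ * w)⁻¹ * w) = ℓ w
    rwa [apply_inv_mul_inv_mul hℓ, add_comm]
  refine ⟨hmaps, fun u _ v _ huv => inv_injective (mul_right_cancel huv), fun v hv => ?_⟩
  refine ⟨w * v⁻¹, ?_, by group⟩
  show ℓ (w * v⁻¹) + ℓ ((w * v⁻¹)⁻¹ * w) = ℓ w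
  rwa [hℓ, mul_inv_rev, inv_inv, inv_mul_cancel_right, add_comm]

lemma inv_mul_interval_antitone [AddCommMonoid M] (hℓ : ∀ a b, ℓ (a * b) = ℓ (b * a)) {u v w : G}
    (huv : ℓ u + ℓ (u⁻¹ * v) + ℓ (v⁻¹ * w) = ℓ w) :
    ℓ (v⁻¹ * w) + ℓ ((v⁻¹ * w)⁻¹ * (u⁻¹ * w)) + ℓ ((u⁻¹ * w)⁻¹ * w) = ℓ w := by
  have hmid : ℓ ((v⁻¹ * w)⁻¹ * (u⁻¹ * w)) = ℓ (u⁻¹ * v) :=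
    calc ℓ ((v⁻¹ * w)⁻¹ * (u⁻¹ * w)) = ℓ (w⁻¹ * (v * u⁻¹ * w)) := by group
      _ = ℓ (v * u⁻¹) := by rw [hℓ, mul_inv_cancel_right]
      _ = ℓ (u⁻¹ * v) := hℓ _ _
  rw [hmid, apply_inv_mul_inv_mul hℓ, ← huv]
  abel

end ClassFunction

section WordLength

variable {G H : Type*} [Group G] [Group H]

lemma exists_list_prod_map {S : Set G} {T : Set H} {f : G →* H} (hf : Set.MapsTo f S T)
    {g : G} {k : ℕ} (h : ∃ l : List G, l.length = k ∧ (∀ x ∈ l, x ∈ S) ∧ l.prod = g) :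
    ∃ l : List H, l.length = k ∧ (∀ x ∈ l, x ∈ T) ∧ l.prod = f g := by
  obtain ⟨l, rfl, hS, rfl⟩ := h
  refine ⟨l.map f, List.length_map _, ?_, (map_list_prod f l).symm⟩
  simpa only [List.mem_map, forall_exists_index, and_imp, forall_apply_eq_imp_iff₂]
    using fun x hx => hf (hS x hx)

lemma wordLength_map_mulEquiv {S : Set G} {T : Set H} (f : G ≃* H) (hf : Set.MapsTo f S T)
    (hf' : Set.MapsTo f.symm T S) (g : G) : wordLength T (f g) = wordLength S g := by
  unfold wordLength
  congr 1
  ext k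
  refine ⟨fun h => ?_, exists_list_prod_map (f := f.toMonoidHom) hf⟩
  simpa using exists_list_prod_map (f := f.symm.toMonoidHom) hf' h

lemma wordLength_mul_comm {S : Set G} (hconj : ∀ s ∈ S, ∀ g : G, g * s * g⁻¹ ∈ S) (a b : G) :
    wordLength S (a * b) = wordLength S (b * a) := by
  have hconj_mapsTo (c : G) : Set.MapsTo (MulAut.conj c) S S := fun s hs => hconj s hs c
  have := wordLength_map_mulEquiv (MulAut.conj a) (hconj_mapsTo a)
    (by simpa using hconj_mapsTo a⁻¹) (b * a)
  simpa [mul_assoc] using this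

end WordLength

theorem interval_self_dual_general {G : Type*} [Group G] (S : Set G)
    (hconj : ∀ s ∈ S, ∀ g : G, g * s * g⁻¹ ∈ S)
    (w : G) :
    Set.BijOn (fun u => u⁻¹ * w)
      {u : G | wordLength S u + wordLength S (u⁻¹ * w) = wordLength S w}
      {u : G | wordLength S u + wordLength S (u⁻¹ * w) = wordLength S w} ∧
    ∀ u v : G,
      wordLength S u + wordLength S (u⁻¹ * v) + wordLength S (v⁻¹ * w) = wordLength S w →
      wordLength S (v⁻¹ * w) + wordLength S ((v⁻¹ * w)⁻¹ * (u⁻¹ * w)) +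
          wordLength S ((u⁻¹ * w)⁻¹ * w) = wordLength S w :=
  ⟨bijOn_inv_mul_interval (wordLength_mul_comm hconj) w,
    fun _ _ => inv_mul_interval_antitone (wordLength_mul_comm hconj)⟩

/-- Let `S` be a symmetric generating set of a group `G` closed under conjugation, with word
length `ℓ`, and fix `w ∈ G`.  The map `u ↦ u⁻¹w` is a bijection of the interval
`[1,w] = {u | ℓ(u) + ℓ(u⁻¹w) = ℓ(w)}` onto itself which reverses the partial order
`u ≼ v ↔ ℓ(u) + ℓ(u⁻¹v) + ℓ(v⁻¹w) = ℓ(w)`: the interval `[1,w]` is self-dual. -/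
theorem interval_self_dual {G : Type*} [Group G] (S : Set G)
    (hgen : Subgroup.closure S = ⊤)
    (hsymm : ∀ s ∈ S, s⁻¹ ∈ S)
    (hconj : ∀ s ∈ S, ∀ g : G, g * s * g⁻¹ ∈ S)
    (w : G) :
    Set.BijOn (fun u => u⁻¹ * w)
      {u : G | wordLength S u + wordLength S (u⁻¹ * w) = wordLength S w}
      {u : G | wordLength S u + wordLength S (u⁻¹ * w) = wordLength S w} ∧
    ∀ u v : G,
      wordLength S u + wordLength S (u⁻¹ * v) + wordLength S (v⁻¹ * w) = wordLength S w →
      wordLength S (v⁻¹ * w) + wordLength S ((v⁻¹ * w)⁻¹ * (u⁻¹ * w)) +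
          wordLength S ((u⁻¹ * w)⁻¹ * w) = wordLength S w :=
  interval_self_dual_general S hconj w
end

section
/- Let n ≥ 2, let W = (Fin n → ZMod 2) ⋊ Equiv.Perm (Fin n) be the Coxeter group of type B_n in its signed-permutation realization, let R be the closure under conjugation of {t_i = (e_i, 1) : i} ∪ {r_{ij} = (0, swap i j) : i ≠ j}, let ℓ be word length with respect to R, and let w = t_1 · r_{12} · r_{23} ⋯ r_{(n−1)n} be the standard Coxeter element. If u lies in the interval [1,w] = {u : ℓ(u) + ℓ(u⁻¹w) = ℓ(w)} and u w = w u, then u = 1 or u = w. -/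
open Multiplicative

/-- The Coxeter group of type `B_n` in its signed-permutation realization
`(Fin n → ZMod 2) ⋊ Equiv.Perm (Fin n)`. -/
abbrev CoxB (n : ℕ) := Multiplicative (Fin n → ZMod 2) ⋊[permAction n (ZMod 2)] Equiv.Perm (Fin n)

/-- The sign changes `t_i` and coordinate transpositions `r_{ij}` generating `Cox(B_n)`. -/
def coxBGens (n : ℕ) : Set (CoxB n) :=
  {x | (∃ i : Fin n, x = SemidirectProduct.inl (ofAdd (Pi.single i (1 : ZMod 2)))) ∨
       (∃ i j : Fin n, i ≠ j ∧ x = SemidirectProduct.inr (Equiv.swap i j))}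

/-- The set of reflections of `Cox(B_n)`: the closure of the generators under conjugation. -/
def coxBRefl (n : ℕ) : Set (CoxB n) :=
  {x | ∃ s ∈ coxBGens n, ∃ g : CoxB n, x = g * s * g⁻¹}

/-- The standard Coxeter element `w = t_1 r_{12} r_{23} ⋯ r_{(n−1)n}` of `Cox(B_n)`. -/
def coxBCoxeterElt (m : ℕ) : CoxB (m + 2) :=
  SemidirectProduct.inl (φ := permAction (m + 2) (ZMod 2)) (ofAdd (Pi.single (0 : Fin (m + 2)) (1 : ZMod 2))) *
    ((List.finRange (m + 1)).map
      (fun i => (SemidirectProduct.inr (Equiv.swap i.castSucc i.succ) : CoxB (m + 2)))).prod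


/-!
Let `ρ` be the signed-permutation representation of `W` on `ℚⁿ`. The dimension of the moved
space `im (ρ g - 1)` is subadditive in `g` and at most `1` on reflections, so it bounds `ℓ`
from below. The permutation part of `w` is the `n`-cycle `i ↦ i + 1`, whose centraliser is
cyclic, and the only sign vectors it fixes are `0` and `1 = w ^ n`; hence every `u` commuting
with `w` is a power `w ^ j`. Since `ρ (w ^ n) = -1`, odd powers of `w` fix no nonzero vector,
so their moved space is all of `ℚⁿ`. For `u = w ^ j ∈ [1, w]` the moved spaces of `u` and of
`u⁻¹ w = w ^ (1 - j)` have dimensions summing to at most `ℓ(w) ≤ n`, and one of `j`, `1 - j` is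
odd; so the other power has trivial moved space and is `1` because `ρ` is faithful.
-/

open SemidirectProduct in
theorem SemidirectProduct.inl_mul_inr_pow {N G : Type*} [CommGroup N] [Group G]
    {φ : G →* MulAut N} (a : N) (g : G) (k : ℕ) :
    (inl a * inr g : N ⋊[φ] G) ^ k = inl (∏ i ∈ Finset.range k, φ (g ^ i) a) * inr (g ^ k) := by
  induction k with
  | zero => simp
  | succ k ih =>
    rw [pow_succ, ih]
    ext <;> simp only [mul_left, mul_right, left_inl, left_inr, right_inl, right_inr, map_one,
      mul_one, one_mul, Finset.prod_range_succ, pow_succ]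

section FinRotate

open Fin.NatCast in
theorem finRotate_pow_apply {n : ℕ} (k : ℕ) (x : Fin (n + 1)) :
    (finRotate (n + 1) ^ k) x = x + k := by
  induction k with
  | zero => simp
  | succ k ih =>
    rw [pow_succ', Equiv.Perm.mul_apply, ih, finRotate_apply, Nat.cast_succ, add_assoc]

theorem finRotate_pow_self (n : ℕ) : finRotate (n + 1) ^ (n + 1) = 1 := by
  ext x
  simp [finRotate_pow_apply]

theorem Fin.cycleRange_mul_swap {n : ℕ} (i j : Fin (n + 1)) (hij : (j : ℕ) = i + 1) :
    Fin.cycleRange i * Equiv.swap i j = Fin.cycleRange j := by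
  ext x
  have := j.isLt
  simp only [Equiv.Perm.mul_apply, Equiv.swap_apply_def, Fin.cycleRange_apply]
  split_ifs <;> simp only [Fin.ext_iff, Fin.lt_def, Fin.val_add_one, Fin.val_zero,
    Fin.val_last] at * <;> (try split_ifs at *) <;> simp_all <;> omega

theorem Fin.cycleRange_eq_prod_swap {m : ℕ} (k : ℕ) (hk : k < m + 2) :
    Fin.cycleRange ⟨k, hk⟩ =
      (((List.finRange (m + 1)).take k).map fun i => Equiv.swap i.castSucc i.succ).prod := by
  induction k with
  | zero => simp
  | succ k ih =>
    have hk' : k < (List.finRange (m + 1)).length := by simp; omega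
    rw [List.take_add_one, List.getElem?_eq_getElem hk', List.map_append, List.prod_append,
      ← ih (by omega)]
    simpa using (Fin.cycleRange_mul_swap _ _ rfl).symm

theorem finRotate_eq_prod_swap (m : ℕ) :
    finRotate (m + 2) =
      ((List.finRange (m + 1)).map fun i => Equiv.swap i.castSucc i.succ).prod := by
  have h := Fin.cycleRange_eq_prod_swap (m := m) (m + 1) (by omega)
  rwa [List.take_of_length_le (by simp), show (⟨m + 1, _⟩ : Fin (m + 2)) = Fin.last (m + 1) from rfl,
    Fin.cycleRange_last] at h

theorem Equiv.Perm.exists_zpow_eq_of_commute_finRotate {n : ℕ} {τ : Equiv.Perm (Fin (n + 2))}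
    (h : Commute τ (finRotate (n + 2))) : ∃ k : ℤ, finRotate (n + 2) ^ k = τ := by
  obtain ⟨_, hτ⟩ := isCycle_finRotate.commute_iff.mp h
  rwa [ofSubtype_subtypePerm _ (by simp [support_finRotate]), Subgroup.mem_zpowers_iff] at hτ

end FinRotate

section MovedSpace

open Module

variable {K V : Type*} [Field K] [AddCommGroup V] [Module K V]

noncomputable def movDim (f : Module.End K V) : ℕ := finrank K (LinearMap.range (f - 1))

theorem movDim_eq_zero_iff [FiniteDimensional K V] {f : Module.End K V} :
    movDim f = 0 ↔ f = 1 := by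
  rw [movDim, Submodule.finrank_eq_zero, LinearMap.range_eq_bot, sub_eq_zero]

theorem movDim_eq_finrank_of_fixed_eq_zero [FiniteDimensional K V] {f : Module.End K V}
    (hf : ∀ x, f x = x → x = 0) : movDim f = finrank K V := by
  refine LinearMap.finrank_range_of_inj
    (LinearMap.ker_eq_bot.mp ((Submodule.eq_bot_iff _).mpr fun x hx => hf x ?_))
  rwa [LinearMap.mem_ker, LinearMap.sub_apply, Module.End.one_apply, sub_eq_zero] at hx

theorem movDim_le_one_of_range_le_span [FiniteDimensional K V] {f : Module.End K V} (v : V)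
    (hf : ∀ x, ∃ c : K, (f - 1) x = c • v) : movDim f ≤ 1 := by
  have hle : LinearMap.range (f - 1) ≤ K ∙ v := by
    rintro _ ⟨x, rfl⟩
    obtain ⟨c, hc⟩ := hf x
    exact Submodule.mem_span_singleton.mpr ⟨c, hc.symm⟩
  exact (Submodule.finrank_mono hle).trans
    (by simpa using finrank_span_le_card (R := K) ({v} : Set V))

theorem movDim_mul_le [FiniteDimensional K V] (f g : Module.End K V) :
    movDim (f * g) ≤ movDim f + movDim g := by
  have hle : LinearMap.range (f * g - 1) ≤ LinearMap.range (f - 1) ⊔ LinearMap.range (g - 1) := by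
    rintro _ ⟨x, rfl⟩
    have : (f * g - 1) x = (f - 1) (g x) + (g - 1) x := by simp
    rw [this]
    exact Submodule.add_mem_sup (LinearMap.mem_range_self _ _) (LinearMap.mem_range_self _ _)
  exact (Submodule.finrank_mono hle).trans (Submodule.finrank_add_le_finrank_add_finrank _ _)

theorem movDim_conj_le [FiniteDimensional K V] {a b : Module.End K V} (hab : a * b = 1)
    (f : Module.End K V) : movDim (a * f * b) ≤ movDim f := by
  have hconj : a * f * b - 1 = a * (f - 1) * b := by
    rw [mul_sub, sub_mul, mul_one, hab]
  have hle : LinearMap.range (a * (f - 1) * b) ≤ (LinearMap.range (f - 1)).map a := by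
    rintro _ ⟨x, rfl⟩
    exact Submodule.mem_map_of_mem (LinearMap.mem_range_self _ _)
  rw [movDim, hconj]
  exact (Submodule.finrank_mono hle).trans (Submodule.finrank_map_le _ _)

end MovedSpace

section WordLength

variable {G : Type*} [Group G] {S : Set G}

theorem wordLength_prod_le_length {l : List G} (hl : ∀ x ∈ l, x ∈ S) :
    wordLength S l.prod ≤ l.length :=
  Nat.sInf_le ⟨l, rfl, hl, rfl⟩

theorem exists_length_eq_wordLength {g : G} (hg : g ∈ Submonoid.closure S) :
    ∃ l : List G, l.length = wordLength S g ∧ (∀ x ∈ l, x ∈ S) ∧ l.prod = g := by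
  obtain ⟨l, hl, rfl⟩ := Submonoid.exists_list_of_mem_closure hg
  have hne : {k | ∃ l' : List G, l'.length = k ∧ (∀ x ∈ l', x ∈ S) ∧ l'.prod = l.prod}.Nonempty :=
    ⟨_, l, rfl, hl, rfl⟩
  exact Nat.sInf_mem hne

theorem movDim_le_wordLength {K V : Type*} [Field K] [AddCommGroup V] [Module K V]
    [FiniteDimensional K V] (ρ : G →* Module.End K V) (hS : ∀ s ∈ S, movDim (ρ s) ≤ 1)
    {g : G} (hg : g ∈ Submonoid.closure S) : movDim (ρ g) ≤ wordLength S g := by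
  obtain ⟨l, hlen, hl, rfl⟩ := exists_length_eq_wordLength hg
  rw [← hlen]
  clear hlen hg
  induction l with
  | nil => simp [movDim_eq_zero_iff.mpr]
  | cons s l ih =>
    simp only [List.forall_mem_cons] at hl
    rw [List.prod_cons, map_mul, List.length_cons]
    have := movDim_mul_le (ρ s) (ρ l.prod)
    have := hS s hl.1
    have := ih hl.2
    omega

end WordLength

section PermAction

theorem permAction_ofAdd_single {n : ℕ} (σ : Equiv.Perm (Fin n)) (i : Fin n) :
    permAction n (ZMod 2) σ (ofAdd (Pi.single i 1)) = ofAdd (Pi.single (σ i) 1) := by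
  refine toAdd.injective (funext fun k => ?_)
  change (Pi.single i 1 : Fin n → ZMod 2) (σ⁻¹ k) = (Pi.single (σ i) 1 : Fin n → ZMod 2) k
  simp only [Pi.single_apply, Equiv.Perm.eq_inv_iff_eq, eq_comm]

theorem toAdd_eq_of_permAction_finRotate_eq {n : ℕ} {A : Type*} [AddCommGroup A]
    {b : Multiplicative (Fin (n + 1) → A)} (hb : permAction (n + 1) A (finRotate (n + 1)) b = b)
    (i : Fin (n + 1)) : toAdd b i = toAdd b 0 := by
  induction i using Fin.induction with
  | zero => rfl
  | succ i ih =>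
    have hrot : (finRotate (n + 1))⁻¹ i.succ = i.castSucc := by
      rw [Equiv.Perm.inv_eq_iff_eq, finRotate_apply, Fin.coeSucc_eq_succ]
    rw [← ih, ← congrFun (congrArg toAdd hb) i.succ]
    exact congrArg (toAdd b) hrot

end PermAction

section Generation

open SemidirectProduct

variable {n : ℕ}

theorem coxBGens_subset_coxBRefl : coxBGens n ⊆ coxBRefl n :=
  fun s hs => ⟨s, hs, 1, by simp⟩

theorem mem_closure_coxBRefl (g : CoxB n) : g ∈ Submonoid.closure (coxBRefl n) := by
  have hgen {s} (hs : s ∈ coxBGens n) : s ∈ Submonoid.closure (coxBRefl n) :=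
    Submonoid.subset_closure (coxBGens_subset_coxBRefl hs)
  have hinl (v : Fin n → ZMod 2) : inl (ofAdd v) ∈ Submonoid.closure (coxBRefl n) := by
    induction v using Pi.single_induction with
    | zero => simp
    | add v w hv hw => simpa using Submonoid.mul_mem _ hv hw
    | single i z =>
      obtain rfl | rfl : z = 0 ∨ z = 1 := by revert z; decide
      · simp
      · exact hgen (Or.inl ⟨i, rfl⟩)
  have hinr (σ : Equiv.Perm (Fin n)) : inr σ ∈ Submonoid.closure (coxBRefl n) := by
    have hσ : σ ∈ Submonoid.closure {τ : Equiv.Perm (Fin n) | τ.IsSwap} := by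
      rw [Equiv.Perm.mclosure_isSwap]; trivial
    induction hσ using Submonoid.closure_induction with
    | mem τ hτ =>
      obtain ⟨i, j, hij, rfl⟩ := hτ
      exact hgen (Or.inr ⟨i, j, hij, rfl⟩)
    | one => simp
    | mul τ τ' _ _ hτ hτ' => simpa using Submonoid.mul_mem _ hτ hτ'
  rw [← inl_left_mul_inr_right g]
  exact Submonoid.mul_mem _ (hinl _) (hinr _)

end Generation

section CoxeterElement

open SemidirectProduct

theorem coxBCoxeterElt_eq (m : ℕ) :
    coxBCoxeterElt m = inl (ofAdd (Pi.single 0 1)) * inr (finRotate (m + 2)) := by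
  rw [coxBCoxeterElt, finRotate_eq_prod_swap, MonoidHom.map_list_prod, List.map_map]
  rfl

theorem coxBCoxeterElt_left (m : ℕ) : (coxBCoxeterElt m).left = ofAdd (Pi.single 0 1) := by
  simp [coxBCoxeterElt_eq]

theorem coxBCoxeterElt_right (m : ℕ) : (coxBCoxeterElt m).right = finRotate (m + 2) := by
  simp [coxBCoxeterElt_eq]

theorem wordLength_coxBCoxeterElt_le (m : ℕ) :
    wordLength (coxBRefl (m + 2)) (coxBCoxeterElt m) ≤ m + 2 := by
  rw [coxBCoxeterElt, ← List.prod_cons]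
  refine (wordLength_prod_le_length fun x hx => coxBGens_subset_coxBRefl ?_).trans (by simp)
  rcases List.mem_cons.mp hx with rfl | hx
  · exact Or.inl ⟨0, rfl⟩
  · obtain ⟨i, -, rfl⟩ := List.mem_map.mp hx
    exact Or.inr ⟨_, _, Fin.castSucc_lt_succ.ne, rfl⟩

open Fin.NatCast in
theorem coxBCoxeterElt_pow_card (m : ℕ) : coxBCoxeterElt m ^ (m + 2) = inl (ofAdd 1) := by
  rw [coxBCoxeterElt_eq, inl_mul_inr_pow, finRotate_pow_self, map_one, mul_one]
  congr 1
  refine toAdd.injective ?_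
  simp only [permAction_ofAdd_single, finRotate_pow_apply, zero_add, toAdd_prod, toAdd_ofAdd]
  rw [Finset.sum_range]
  simpa using Finset.univ_sum_single (1 : Fin (m + 2) → ZMod 2)

theorem coxBCoxeterElt_zpow_pow_card_of_odd (m : ℕ) {t : ℤ} (ht : Odd t) :
    (coxBCoxeterElt m ^ t) ^ (m + 2) = inl (ofAdd 1) := by
  have hsq : (inl (ofAdd 1) : CoxB (m + 2)) * inl (ofAdd 1) = 1 := by
    rw [← map_mul, ← ofAdd_add, show (1 + 1 : Fin (m + 2) → ZMod 2) = 0 from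
      funext fun _ => rfl, ofAdd_zero, map_one]
  obtain ⟨k, rfl⟩ := ht
  rw [← zpow_natCast, ← zpow_mul, mul_comm, zpow_mul, zpow_natCast, coxBCoxeterElt_pow_card,
    zpow_add_one, zpow_mul, zpow_two, hsq, one_zpow, one_mul]

theorem exists_eq_zpow_of_commute_coxBCoxeterElt {m : ℕ} {u : CoxB (m + 2)}
    (hu : Commute u (coxBCoxeterElt m)) : ∃ j : ℤ, u = coxBCoxeterElt m ^ j := by
  set w := coxBCoxeterElt m
  obtain ⟨k, hk⟩ := Equiv.Perm.exists_zpow_eq_of_commute_finRotate (n := m)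
    (by simpa [w, coxBCoxeterElt_right] using hu.map (rightHom : CoxB (m + 2) →* _))
  set v := u * w ^ (-k)
  have hv_right : v.right = 1 := by
    change rightHom (u * w ^ (-k)) = 1
    rw [map_mul, map_zpow]
    change u.right * w.right ^ (-k) = 1
    rw [← hk, coxBCoxeterElt_right, zpow_neg, mul_inv_cancel]
  have hv : inl v.left = v := by
    conv_rhs => rw [← inl_left_mul_inr_right v, hv_right, map_one, mul_one]
  have hvw : Commute v w := hu.mul_left ((Commute.refl w).zpow_left _)
  have hfix : permAction (m + 2) (ZMod 2) (finRotate (m + 2)) v.left = v.left := by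
    have := congrArg SemidirectProduct.left hvw.eq
    simp only [mul_left, hv_right, coxBCoxeterElt_left, coxBCoxeterElt_right, w, map_one,
      MulAut.one_apply] at this
    exact mul_left_cancel (this.symm.trans (mul_comm _ _))
  have hu_eq : u = v * w ^ k := by simp [v, zpow_neg]
  obtain h0 | h1 : toAdd v.left 0 = 0 ∨ toAdd v.left 0 = 1 := by
    generalize toAdd v.left 0 = z; revert z; decide
  · refine ⟨k, ?_⟩
    have hv_one : v.left = 1 :=
      toAdd.injective (funext fun i => (toAdd_eq_of_permAction_finRotate_eq hfix i).trans h0)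
    rw [hu_eq, ← hv, hv_one, map_one, one_mul]
  · refine ⟨(m + 2 : ℕ) + k, ?_⟩
    have hv_pow : v.left = ofAdd 1 :=
      toAdd.injective (funext fun i => (toAdd_eq_of_permAction_finRotate_eq hfix i).trans h1)
    rw [hu_eq, ← hv, hv_pow, ← coxBCoxeterElt_pow_card, zpow_add, zpow_natCast]

end CoxeterElement

namespace CoxB

open SemidirectProduct

variable {n : ℕ}

def sign (z : ZMod 2) : ℚ := (-1) ^ z.val

theorem sign_add (a b : ZMod 2) : sign (a + b) = sign a * sign b := by
  rw [sign, ZMod.val_add, ← neg_one_pow_eq_pow_mod_two, pow_add, sign, sign]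

theorem sign_zero : sign 0 = 1 := rfl

theorem sign_one : sign 1 = -1 := rfl

theorem sign_eq_one_iff {z : ZMod 2} : sign z = 1 ↔ z = 0 := by
  obtain rfl | rfl : z = 0 ∨ z = 1 := by revert z; decide
  · simp [sign_zero]
  · norm_num [sign_one]

def signedPerm : CoxB n →* Module.End ℚ (Fin n → ℚ) where
  toFun g :=
    { toFun := fun x i => sign (toAdd g.left i) * x (g.right⁻¹ i)
      map_add' := fun x y => funext fun i => mul_add _ _ _
      map_smul' := fun c x => funext fun i => mul_left_comm _ _ _ }
  map_one' := LinearMap.ext fun x => funext fun i => one_mul (x i)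
  map_mul' g h := LinearMap.ext fun x => funext fun i => by
    change sign (toAdd g.left i + toAdd h.left (g.right⁻¹ i)) * x (h.right⁻¹ (g.right⁻¹ i)) =
      sign (toAdd g.left i) * (sign (toAdd h.left (g.right⁻¹ i)) * x (h.right⁻¹ (g.right⁻¹ i)))
    rw [sign_add, mul_assoc]

theorem signedPerm_inl_apply (v : Multiplicative (Fin n → ZMod 2)) (x : Fin n → ℚ) (i : Fin n) :
    signedPerm (inl v) x i = sign (toAdd v i) * x i := rfl

theorem signedPerm_inr_apply (σ : Equiv.Perm (Fin n)) (x : Fin n → ℚ) (i : Fin n) :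
    signedPerm (inr σ) x i = x (σ⁻¹ i) := one_mul _

theorem eq_one_of_signedPerm_eq_one {g : CoxB n} (hg : signedPerm g = 1) : g = 1 := by
  have hfix (x : Fin n → ℚ) (i : Fin n) : sign (toAdd g.left i) * x (g.right⁻¹ i) = x i :=
    congrFun (LinearMap.congr_fun hg x) i
  have hleft : g.left = 1 := by
    refine toAdd.injective (funext fun i => ?_)
    have h := hfix 1 i
    rw [Pi.one_apply, mul_one] at h
    exact sign_eq_one_iff.mp h
  have hright : g.right = 1 := by
    rw [← inv_eq_one]
    ext i
    simpa [hleft, sign_zero] using hfix (fun j => (j : ℚ)) i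
  rw [← inl_left_mul_inr_right g, hleft, hright, map_one, map_one, one_mul]

theorem movDim_signedPerm_le_one_of_mem_coxBGens {s : CoxB n} (hs : s ∈ coxBGens n) :
    movDim (signedPerm s) ≤ 1 := by
  rcases hs with ⟨i, rfl⟩ | ⟨i, j, hij, rfl⟩
  · refine movDim_le_one_of_range_le_span (Pi.single i 1) fun x => ⟨-2 * x i, funext fun k => ?_⟩
    simp only [LinearMap.sub_apply, Module.End.one_apply, Pi.sub_apply, Pi.smul_apply,
      signedPerm_inl_apply, toAdd_ofAdd, smul_eq_mul]
    rcases eq_or_ne k i with rfl | hk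
    · simp only [Pi.single_eq_same, sign_one]
      ring
    · simp [hk, sign_zero]
  · refine movDim_le_one_of_range_le_span (Pi.single i 1 - Pi.single j 1)
      fun x => ⟨x j - x i, funext fun k => ?_⟩
    simp only [LinearMap.sub_apply, Module.End.one_apply, Pi.sub_apply, Pi.smul_apply,
      signedPerm_inr_apply, Equiv.swap_inv, smul_eq_mul]
    rcases eq_or_ne k i with rfl | hki
    · simp [hij]
    rcases eq_or_ne k j with rfl | hkj
    · simp [hki]
    · simp [Equiv.swap_apply_of_ne_of_ne hki hkj, hki, hkj]

theorem movDim_signedPerm_le_one_of_mem_coxBRefl {r : CoxB n} (hr : r ∈ coxBRefl n) :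
    movDim (signedPerm r) ≤ 1 := by
  obtain ⟨s, hs, g, rfl⟩ := hr
  rw [map_mul, map_mul]
  refine (movDim_conj_le ?_ _).trans (movDim_signedPerm_le_one_of_mem_coxBGens hs)
  rw [← map_mul, mul_inv_cancel, map_one]

theorem movDim_signedPerm_le_wordLength (g : CoxB n) :
    movDim (signedPerm g) ≤ wordLength (coxBRefl n) g :=
  movDim_le_wordLength signedPerm (fun _ => movDim_signedPerm_le_one_of_mem_coxBRefl)
    (mem_closure_coxBRefl g)

theorem signedPerm_inl_ofAdd_one : signedPerm (inl (ofAdd 1) : CoxB n) = -1 :=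
  LinearMap.ext fun x => funext fun i => by simp [signedPerm_inl_apply, sign_one]

theorem eq_zero_of_signedPerm_coxBCoxeterElt_zpow_apply_eq (m : ℕ) {t : ℤ} (ht : Odd t)
    {x : Fin (m + 2) → ℚ} (hx : signedPerm (coxBCoxeterElt m ^ t) x = x) : x = 0 := by
  have hpow : signedPerm ((coxBCoxeterElt m ^ t) ^ (m + 2)) x = x := by
    rw [map_pow, Module.End.pow_apply]
    exact Function.IsFixedPt.iterate hx _
  rw [coxBCoxeterElt_zpow_pow_card_of_odd m ht, signedPerm_inl_ofAdd_one] at hpow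
  funext i
  have := congrFun hpow i
  simp only [LinearMap.neg_apply, Module.End.one_apply, Pi.neg_apply] at this
  simp only [Pi.zero_apply]
  linarith

theorem movDim_signedPerm_coxBCoxeterElt_zpow (m : ℕ) {t : ℤ} (ht : Odd t) :
    movDim (signedPerm (coxBCoxeterElt m ^ t)) = m + 2 := by
  rw [movDim_eq_finrank_of_fixed_eq_zero
    fun _ => eq_zero_of_signedPerm_coxBCoxeterElt_zpow_apply_eq m ht, Module.finrank_fin_fun]

end CoxB

/-- In the interval `[1, w]` of the type `B_n` Coxeter group (`n = m + 2 ≥ 2`) with respect to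
its reflection generating set `R`, the only elements commuting with the Coxeter element `w`
are `1` and `w`. -/
theorem coxB_commuting_with_w (m : ℕ) (u : CoxB (m + 2))
    (hu : wordLength (coxBRefl (m + 2)) u +
        wordLength (coxBRefl (m + 2)) (u⁻¹ * coxBCoxeterElt m) =
        wordLength (coxBRefl (m + 2)) (coxBCoxeterElt m))
    (hcomm : u * coxBCoxeterElt m = coxBCoxeterElt m * u) :
    u = 1 ∨ u = coxBCoxeterElt m := by
  obtain ⟨j, rfl⟩ := exists_eq_zpow_of_commute_coxBCoxeterElt hcomm
  set w := coxBCoxeterElt m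
  have hv : (w ^ j)⁻¹ * w = w ^ (1 - j) := by
    rw [← zpow_neg, ← zpow_add_one, neg_add_eq_sub]
  have hsum : movDim (CoxB.signedPerm (w ^ j)) + movDim (CoxB.signedPerm (w ^ (1 - j))) ≤ m + 2 :=
    calc _ ≤ wordLength (coxBRefl (m + 2)) (w ^ j) +
          wordLength (coxBRefl (m + 2)) ((w ^ j)⁻¹ * w) := by
          rw [hv]
          exact add_le_add (CoxB.movDim_signedPerm_le_wordLength _)
            (CoxB.movDim_signedPerm_le_wordLength _)
      _ = wordLength (coxBRefl (m + 2)) w := hu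
      _ ≤ m + 2 := wordLength_coxBCoxeterElt_le m
  rcases Int.even_or_odd j with hj | hj
  · have h : movDim (CoxB.signedPerm (w ^ (1 - j))) = m + 2 :=
      CoxB.movDim_signedPerm_coxBCoxeterElt_zpow m (odd_one.sub_even hj)
    exact .inl (CoxB.eq_one_of_signedPerm_eq_one (movDim_eq_zero_iff.mp (by omega)))
  · have h : movDim (CoxB.signedPerm (w ^ j)) = m + 2 :=
      CoxB.movDim_signedPerm_coxBCoxeterElt_zpow m hj
    have hv_one : (w ^ j)⁻¹ * w = 1 :=
      CoxB.eq_one_of_signedPerm_eq_one (movDim_eq_zero_iff.mp (by rw [hv]; omega))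
    exact .inr (inv_mul_eq_one.mp hv_one)
end

section
/- Let n ≥ 1 and let E = EuclideanSpace ℝ (Fin n). The subgroup of the group of affine isometries of E generated by the coordinate-transposition maps r_{ij} (the linear isometries permuting the i-th and j-th coordinates, i ≠ j) together with the translations t_i by the standard basis vectors e_i is isomorphic to the semidirect product (Fin n → ℤ) ⋊ Equiv.Perm (Fin n): the natural homomorphism sending (λ, π) to the isometry x ↦ λ + π·x (where (π·x)(i) = x(π⁻¹(i))) is injective and its image is exactly this subgroup. In particular, every element of this subgroup can be written uniquely as t_λ r_π, a translation by an integer vector followed by a coordinate permutation. -/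
open Multiplicative

abbrev Euc (n : ℕ) := EuclideanSpace ℝ (Fin n)

/-- The euclidean vector with the coordinates of an integer vector. -/
noncomputable def intVec {n : ℕ} (v : Fin n → ℤ) : Euc n :=
  (WithLp.equiv 2 (Fin n → ℝ)).symm fun i => (v i : ℝ)

lemma intVec_add {n : ℕ} (v w : Fin n → ℤ) : intVec (v + w) = intVec v + intVec w := by
  ext i
  simp [intVec]

lemma intVec_zero {n : ℕ} : intVec (0 : Fin n → ℤ) = 0 := by
  ext i
  simp [intVec]

/-- Translations by integer vectors, as a homomorphism to affine isometries. -/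
noncomputable def transHom (n : ℕ) : Multiplicative (Fin n → ℤ) →* (Euc n ≃ᵃⁱ[ℝ] Euc n) where
  toFun v := AffineIsometryEquiv.constVAdd ℝ (Euc n) (intVec (toAdd v))
  map_one' := by
    show AffineIsometryEquiv.constVAdd ℝ (Euc n) (intVec 0) = 1
    rw [intVec_zero, AffineIsometryEquiv.constVAdd_zero]
    rfl
  map_mul' a b := by
    refine AffineIsometryEquiv.ext fun x => ?_
    show intVec (toAdd a + toAdd b) +ᵥ x = intVec (toAdd a) +ᵥ (intVec (toAdd b) +ᵥ x)
    rw [intVec_add, vadd_vadd]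

/-- Coordinate permutations, as a homomorphism to affine isometries. -/
noncomputable def permIsoHom (n : ℕ) :
    Equiv.Perm (Fin n) →* (Euc n ≃ᵃⁱ[ℝ] Euc n) where
  toFun π := (LinearIsometryEquiv.piLpCongrLeft 2 ℝ ℝ π).toAffineIsometryEquiv
  map_one' := by
    refine AffineIsometryEquiv.ext fun x => ?_
    rfl
  map_mul' π σ := by
    refine AffineIsometryEquiv.ext fun x => ?_
    rfl

lemma intVec_perm {n : ℕ} (g : Equiv.Perm (Fin n)) (v : Fin n → ℤ) :
    intVec (fun i => v (g⁻¹ i)) = (LinearIsometryEquiv.piLpCongrLeft 2 ℝ ℝ g) (intVec v) := by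
  ext i
  simp [intVec, LinearIsometryEquiv.piLpCongrLeft_apply, Equiv.piCongrLeft']

lemma transHom_compat (n : ℕ) (g : Equiv.Perm (Fin n)) :
    ∀ v : Multiplicative (Fin n → ℤ),
      (transHom n) (ofAdd fun i => toAdd v (g⁻¹ i)) =
        MulAut.conj ((permIsoHom n) g) ((transHom n) v) := by
  intro v
  refine AffineIsometryEquiv.ext fun x => ?_
  show intVec (fun i => toAdd v (g⁻¹ i)) +ᵥ x
      = ((permIsoHom n) g) (intVec (toAdd v) +ᵥ ((permIsoHom n) g)⁻¹ x)
  rw [AffineIsometryEquiv.map_vadd, intVec_perm]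
  simp only [AffineIsometryEquiv.coe_inv, AffineIsometryEquiv.apply_symm_apply]
  show _ +ᵥ x = ((LinearIsometryEquiv.piLpCongrLeft 2 ℝ ℝ g).toAffineIsometryEquiv.linearIsometryEquiv)
      (intVec (toAdd v)) +ᵥ x
  rw [LinearIsometryEquiv.toAffineIsometryEquiv_linearIsometryEquiv]

/-- The natural homomorphism from the middle group `Mid(B_n)` to the group of affine
isometries of `ℝⁿ`, sending `(λ, π)` to the isometry `x ↦ λ + π·x`. -/
noncomputable def midToIso (n : ℕ) : Mid n →* (Euc n ≃ᵃⁱ[ℝ] Euc n) :=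
  SemidirectProduct.lift (transHom n) (permIsoHom n)
    (fun g => MonoidHom.ext fun v => transHom_compat n g v)

/-! `(λ, π)` acts by `x ↦ λ + π·x`, so its value at `0` recovers `λ`, and once `λ` is cancelled
its values on the standard basis vectors recover `π`; hence the action is faithful. The image of
a semidirect product is generated by the images of its two factors, and these are generated by
the unit translations (since `ℤⁿ` is spanned by its standard basis) and by the transpositions. -/

namespace SemidirectProduct

variable {N G H : Type*} [Group N] [Group G] [Group H] {φ : G →* MulAut N}

theorem range_lift (fn : N →* H) (fg : G →* H)
    (h : ∀ g, fn.comp (φ g).toMonoidHom = (MulAut.conj (fg g)).toMonoidHom.comp fn) :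
    (lift fn fg h).range = fn.range ⊔ fg.range := by
  apply le_antisymm
  · rintro _ ⟨⟨n, g⟩, rfl⟩
    rw [mk_eq_inl_mul_inr, map_mul, lift_inl, lift_inr]
    exact Subgroup.mul_mem_sup ⟨n, rfl⟩ ⟨g, rfl⟩
  · refine sup_le ?_ ?_ <;> rintro _ ⟨x, rfl⟩
    exacts [⟨inl x, lift_inl fn fg h x⟩, ⟨inr x, lift_inr fn fg h x⟩]

end SemidirectProduct

theorem closure_range_ofAdd_single (ι : Type*) [Fintype ι] [DecidableEq ι] :
    Subgroup.closure (Set.range fun i : ι => ofAdd (Pi.single i (1 : ℤ))) = ⊤ := by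
  have h := congrArg (fun S => S.toAddSubgroup.toSubgroup) (Pi.basisFun ℤ ι).span_eq
  simp only [Submodule.span_int_eq_addSubgroupClosure, AddSubgroup.toSubgroup_closure] at h
  convert h using 2
  · ext x
    simp only [Pi.basisFun_apply, Set.mem_range, Set.mem_preimage]
    exact exists_congr fun y => ⟨fun h => h ▸ rfl, fun h => by rw [h]; rfl⟩
  · simp

@[simp]
theorem intVec_apply {n : ℕ} (v : Fin n → ℤ) (i : Fin n) : intVec v i = v i := rfl

theorem intVec_injective (n : ℕ) : Function.Injective (intVec (n := n)) := fun v w h =>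
  funext fun i => by
    have hi : (v i : ℝ) = w i := congrArg (· i) h
    exact_mod_cast hi

theorem intVec_single {n : ℕ} (i : Fin n) :
    intVec (Pi.single i 1) = EuclideanSpace.single i (1 : ℝ) := by
  ext j
  rw [intVec_apply, PiLp.single_apply, Pi.single_apply]
  split_ifs <;> simp

theorem permIsoHom_apply {n : ℕ} (π : Equiv.Perm (Fin n)) (x : Euc n) (i : Fin n) :
    permIsoHom n π x i = x (π⁻¹ i) := by
  simp [permIsoHom, LinearIsometryEquiv.piLpCongrLeft_apply, Equiv.piCongrLeft']

theorem transHom_apply {n : ℕ} (v : Multiplicative (Fin n → ℤ)) (x : Euc n) :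
    transHom n v x = intVec (toAdd v) + x := rfl

theorem midToIso_mk {n : ℕ} (v : Multiplicative (Fin n → ℤ)) (π : Equiv.Perm (Fin n)) :
    midToIso n ⟨v, π⟩ = transHom n v * permIsoHom n π := rfl

theorem midToIso_apply {n : ℕ} (v : Fin n → ℤ) (π : Equiv.Perm (Fin n)) (x : Euc n)
    (i : Fin n) : midToIso n ⟨ofAdd v, π⟩ x i = v i + x (π⁻¹ i) := by
  rw [midToIso_mk, AffineIsometryEquiv.coe_mul, Function.comp_apply, transHom_apply,
    PiLp.add_apply, permIsoHom_apply, toAdd_ofAdd, intVec_apply]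

theorem midToIso_apply_zero {n : ℕ} (v : Multiplicative (Fin n → ℤ)) (π : Equiv.Perm (Fin n)) :
    midToIso n ⟨v, π⟩ 0 = intVec (toAdd v) := by
  ext i
  rw [← ofAdd_toAdd v, midToIso_apply]
  simp

theorem permIsoHom_injective (n : ℕ) : Function.Injective (permIsoHom n) := by
  refine fun π σ h => Equiv.ext fun j => ?_
  have h_single := congrArg (fun f => f (EuclideanSpace.single j (1 : ℝ)) (π j)) h
  simpa [permIsoHom_apply, PiLp.single_apply, Equiv.symm_apply_eq] using h_single

theorem midToIso_injective (n : ℕ) : Function.Injective (midToIso n) := by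
  rintro ⟨v, π⟩ ⟨w, σ⟩ h
  obtain rfl : v = w := toAdd.injective <| intVec_injective n <| by
    rw [← midToIso_apply_zero v π, ← midToIso_apply_zero w σ, h]
  rw [midToIso_mk, midToIso_mk, mul_right_inj] at h
  rw [permIsoHom_injective n h]

theorem transHom_range (n : ℕ) : (transHom n).range =
    Subgroup.closure (Set.range fun i => AffineIsometryEquiv.constVAdd ℝ (Euc n)
      (EuclideanSpace.single i (1 : ℝ))) := by
  rw [MonoidHom.range_eq_map, ← closure_range_ofAdd_single, MonoidHom.map_closure,
    ← Set.range_comp]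
  congr! 3 with i
  exact congrArg (AffineIsometryEquiv.constVAdd ℝ (Euc n)) (intVec_single i)

theorem permIsoHom_range (n : ℕ) :
    (permIsoHom n).range = Subgroup.closure (permIsoHom n '' {σ | σ.IsSwap}) := by
  rw [MonoidHom.range_eq_map, ← Equiv.Perm.closure_isSwap, MonoidHom.map_closure]

/-- For `n = m + 1 ≥ 1`, the natural homomorphism `(λ, π) ↦ (x ↦ λ + π·x)` from
`(Fin n → ℤ) ⋊ Equiv.Perm (Fin n)` to the affine isometries of `ℝⁿ` is injective, and its
image is exactly the subgroup generated by the coordinate transpositions `r_{ij}` and the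
translations `t_i` by standard basis vectors.  In particular every element of that subgroup
is uniquely of the form `t_λ r_π`. -/
theorem middle_group_realization (m : ℕ) :
    Function.Injective (midToIso (m + 1)) ∧
    (midToIso (m + 1)).range =
      Subgroup.closure
        ({f | ∃ i j : Fin (m + 1), i ≠ j ∧ f = (permIsoHom (m + 1)) (Equiv.swap i j)} ∪
         {f | ∃ i : Fin (m + 1),
            f = AffineIsometryEquiv.constVAdd ℝ (Euc (m + 1))
              (EuclideanSpace.single i (1 : ℝ))}) ∧
    ∀ (v : Fin (m + 1) → ℤ) (π : Equiv.Perm (Fin (m + 1))) (x : Euc (m + 1))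
        (i : Fin (m + 1)),
      (midToIso (m + 1) ⟨ofAdd v, π⟩) x i = (v i : ℝ) + x (π⁻¹ i) := by
  refine ⟨midToIso_injective _, ?_, fun v π x i => midToIso_apply v π x i⟩
  rw [midToIso, SemidirectProduct.range_lift, transHom_range, permIsoHom_range,
    ← Subgroup.closure_union, Set.union_comm]
  congr! 2 <;> ext f
  · simp [Equiv.Perm.IsSwap, eq_comm]
  · simp [eq_comm]
end

section
/- Let G be a group, let S ⊆ G be a generating set with S = S⁻¹, let ε > 0, and let wt : S → ℝ be a weight function with wt(s) = wt(s⁻¹) ≥ ε for all s ∈ S whose image wt(S) is a closed, discrete subset of ℝ. For g ∈ G let ℓ_wt(g) be the infimum, over all finite tuples (s_1,…,s_k) of elements of S with s_1 s_2 ⋯ s_k = g, of the total weight wt(s_1) + ⋯ + wt(s_k). Then for every g ∈ G this infimum is attained: there exists a tuple (s_1,…,s_k) with s_1 ⋯ s_k = g and wt(s_1) + ⋯ + wt(s_k) = ℓ_wt(g). -/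
/-!
Only finitely many weights of letters `s ∈ S` lie below any given bound `C` (they form a closed discrete
subset of the compact interval `[ε, C]`), and a word of weight at most `C` has at most `C / ε`
letters. Hence only finitely many total weights below the weight `C` of one fixed word of `g`
occur, and the least of them is the minimum of all total weights of words for `g`.
-/

open Set

lemma Set.Finite.setOf_forall_mem_length_le {α : Type*} {K : Set α} (hK : K.Finite) (N : ℕ) :
    {m : List α | (∀ x ∈ m, x ∈ K) ∧ m.length ≤ N}.Finite := by
  have : Finite K := hK.to_subtype
  refine ((List.finite_length_le K N).image (List.map Subtype.val)).subset ?_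
  rintro m ⟨hmK, hlen⟩
  exact ⟨m.pmap Subtype.mk hmK, by simpa using hlen, by simp [List.map_pmap]⟩

lemma finite_setOf_sum_inter_Iic {W : Set ℝ} {ε : ℝ} (hε : 0 < ε) (hW : ∀ w ∈ W, ε ≤ w)
    (hclosed : IsClosed W) (hdiscrete : DiscreteTopology W) (C : ℝ) :
    (List.sum '' {m : List ℝ | ∀ x ∈ m, x ∈ W} ∩ Iic C).Finite := by
  have hK : (Icc ε C ∩ W).Finite :=
    Metric.finite_isBounded_inter_isClosed (isDiscrete_iff_discreteTopology.2 hdiscrete)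
      (Metric.isBounded_Icc ε C) hclosed
  refine ((hK.setOf_forall_mem_length_le ⌊C / ε⌋₊).image List.sum).subset ?_
  rintro _ ⟨⟨m, hmW, rfl⟩, hle : m.sum ≤ C⟩
  have hnonneg : ∀ x ∈ m, 0 ≤ x := fun x hx => hε.le.trans (hW x (hmW x hx))
  refine ⟨m, ⟨fun x hx => ⟨⟨hW x (hmW x hx), ?_⟩, hmW x hx⟩, ?_⟩, rfl⟩
  · exact (List.single_le_sum hnonneg x hx).trans hle
  · have hlen : m.length • ε ≤ m.sum := List.card_nsmul_le_sum m ε fun x hx => hW x (hmW x hx)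
    rw [nsmul_eq_mul] at hlen
    exact Nat.le_floor ((le_div_iff₀ hε).2 (hlen.trans hle))

lemma csInf_mem_of_finite_inter_Iic {α : Type*} [ConditionallyCompleteLinearOrder α]
    {T : Set α} {c : α} (hc : c ∈ T) (hfin : (T ∩ Iic c).Finite) : sInf T ∈ T := by
  obtain ⟨hmT, hmc⟩ : sInf (T ∩ Iic c) ∈ T ∩ Iic c := Nonempty.csInf_mem ⟨c, hc, le_rfl⟩ hfin
  have hleast : IsLeast T (sInf (T ∩ Iic c)) := by
    refine ⟨hmT, fun t ht => ?_⟩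
    rcases le_total t c with htc | hct
    · exact csInf_le hfin.bddBelow ⟨ht, htc⟩
    · exact hmc.trans hct
  exact hleast.csInf_eq ▸ hmT

lemma Subgroup.exists_list_prod_eq_of_closure_eq_top {G : Type*} [Group G] {S : Set G}
    (hgen : Subgroup.closure S = ⊤) (hsymm : ∀ s ∈ S, s⁻¹ ∈ S) (g : G) :
    ∃ l : List G, (∀ x ∈ l, x ∈ S) ∧ l.prod = g := by
  have hinv : S⁻¹ ⊆ S := fun x hx => by simpa using hsymm _ hx
  have hg : g ∈ Submonoid.closure S := by
    rw [← union_eq_left.2 hinv, ← Subgroup.closure_toSubmonoid, hgen]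
    exact Subgroup.mem_top g
  exact Submonoid.exists_list_of_mem_closure hg

theorem weighted_length_attained_general {G : Type*} [Group G] (S : Set G)
    (hgen : Subgroup.closure S = ⊤)
    (hsymm : ∀ s ∈ S, s⁻¹ ∈ S)
    (ε : ℝ) (hε : 0 < ε)
    (wt : G → ℝ)
    (hwt_ge : ∀ s ∈ S, ε ≤ wt s)
    (hclosed : IsClosed (wt '' S))
    (hdiscrete : DiscreteTopology ↥(wt '' S)) :
    ∀ g : G, ∃ l : List G, (∀ x ∈ l, x ∈ S) ∧ l.prod = g ∧
      (l.map wt).sum =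
        sInf {c : ℝ | ∃ l' : List G, (∀ x ∈ l', x ∈ S) ∧ l'.prod = g ∧ (l'.map wt).sum = c} := by
  intro g
  obtain ⟨l₀, hl₀S, hl₀g⟩ := Subgroup.exists_list_prod_eq_of_closure_eq_top hgen hsymm g
  set T := {c : ℝ | ∃ l' : List G, (∀ x ∈ l', x ∈ S) ∧ l'.prod = g ∧ (l'.map wt).sum = c}
  have hfin : (T ∩ Iic (l₀.map wt).sum).Finite := by
    refine (finite_setOf_sum_inter_Iic hε (by simpa using hwt_ge) hclosed hdiscrete
      (l₀.map wt).sum).subset ?_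
    rintro _ ⟨⟨l, hlS, -, rfl⟩, hle⟩
    refine ⟨⟨l.map wt, fun x hx => ?_, rfl⟩, hle⟩
    obtain ⟨s, hs, rfl⟩ := List.mem_map.1 hx
    exact mem_image_of_mem wt (hlS s hs)
  have hl₀T : (l₀.map wt).sum ∈ T := ⟨l₀, hl₀S, hl₀g, rfl⟩
  obtain ⟨l, hlS, hlg, hl⟩ := csInf_mem_of_finite_inter_Iic hl₀T hfin
  exact ⟨l, hlS, hlg, hl⟩

/-- Let `S` be a symmetric generating set of a group `G` equipped with a weight function
`wt` whose values on `S` are bounded below by some `ε > 0` and form a closed discrete subset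
of `ℝ`.  Then for every `g ∈ G` the infimum of the total weights of words in `S` representing
`g` is attained by an actual word. -/
theorem weighted_length_attained {G : Type*} [Group G] (S : Set G)
    (hgen : Subgroup.closure S = ⊤)
    (hsymm : ∀ s ∈ S, s⁻¹ ∈ S)
    (ε : ℝ) (hε : 0 < ε)
    (wt : G → ℝ)
    (hwt_symm : ∀ s ∈ S, wt s⁻¹ = wt s)
    (hwt_ge : ∀ s ∈ S, ε ≤ wt s)
    (hclosed : IsClosed (wt '' S))
    (hdiscrete : DiscreteTopology ↥(wt '' S)) :
    ∀ g : G, ∃ l : List G, (∀ x ∈ l, x ∈ S) ∧ l.prod = g ∧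
      (l.map wt).sum =
        sInf {c : ℝ | ∃ l' : List G, (∀ x ∈ l', x ∈ S) ∧ l'.prod = g ∧ (l'.map wt).sum = c} :=
  weighted_length_attained_general S hgen hsymm ε hε wt hwt_ge hclosed hdiscrete
end
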